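/- Let n, k be positive integers and let ω be a primitive (2nk)-th root of unity in a field of characteristic 0. Let G be the subgroup of GL(2) generated by g = diag(ω^{2k}, ω^{-2k}) and h = antidiag(ωⁿ, ωⁿ) (i.e., h has zero diagonal and both antidiagonal entries ωⁿ). Then G contains no element that is either a diagonal matrix diag(a,d) with exactly one of a,d equal to 1, or an antidiagonal matrix with product of antidiagonal entries equal to -1, if and only if k ≢ 2 (mod 4) and gcd(n,k) ≤ 2. -/
import Mathlib

section Aux

variable {K : Type*} [Field K] (ω : K)

/-- diagonal matrix with `ω`-power entries -/
def dmat (a b : ℤ) : Matrix (Fin 2) (Fin 2) K := !![ω^a, 0; 0, ω^b]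

/-- antidiagonal matrix with `ω`-power entries -/
def amat (a b : ℤ) : Matrix (Fin 2) (Fin 2) K := !![0, ω^a; ω^b, 0]

variable {ω}

lemma dmat_congr {a b a' b' : ℤ} (h1 : a = a') (h2 : b = b') :
    dmat ω a b = dmat ω a' b' := by rw [h1, h2]

lemma amat_congr {a b a' b' : ℤ} (h1 : a = a') (h2 : b = b') :
    amat ω a b = amat ω a' b' := by rw [h1, h2]

lemma dmat_zero : dmat ω 0 0 = 1 := by
  simp [dmat, Matrix.one_fin_two]

lemma dmul (hω0 : ω ≠ 0) (a b c d : ℤ) :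
    dmat ω a b * dmat ω c d = dmat ω (a+c) (b+d) := by
  simp [dmat, Matrix.mul_fin_two, zpow_add₀ hω0]

lemma damul (hω0 : ω ≠ 0) (a b c d : ℤ) :
    dmat ω a b * amat ω c d = amat ω (a+c) (b+d) := by
  simp [dmat, amat, Matrix.mul_fin_two, zpow_add₀ hω0]

lemma admul (hω0 : ω ≠ 0) (a b c d : ℤ) :
    amat ω a b * dmat ω c d = amat ω (a+d) (b+c) := by
  simp [dmat, amat, Matrix.mul_fin_two, zpow_add₀ hω0, mul_comm]

lemma aamul (hω0 : ω ≠ 0) (a b c d : ℤ) :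
    amat ω a b * amat ω c d = dmat ω (a+d) (b+c) := by
  simp [dmat, amat, Matrix.mul_fin_two, zpow_add₀ hω0]

lemma dmat_inv (hω0 : ω ≠ 0) (a b : ℤ) : (dmat ω a b)⁻¹ = dmat ω (-a) (-b) :=
  Matrix.inv_eq_right_inv (by rw [dmul hω0]; simp [dmat_zero])

lemma amat_inv (hω0 : ω ≠ 0) (a b : ℤ) : (amat ω a b)⁻¹ = amat ω (-b) (-a) :=
  Matrix.inv_eq_right_inv (by rw [aamul hω0]; simp [dmat_zero])

end Aux

lemma aux_k4 (k : ℕ) (t j : ℤ) (h : (k:ℤ) * (1+2*t) = 2*(1+2*j)) : k % 4 = 2 := by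
  rcases Int.even_or_odd (k:ℤ) with ⟨m,hm⟩ | ⟨m,hm⟩
  · rw [hm] at h
    have h' : m * (1+2*t) = 1+2*j := by linarith
    rcases Int.even_or_odd m with ⟨u,hu⟩ | ⟨u,hu⟩
    · exfalso
      rw [hu] at h'
      have he : (u+u) * (1+2*t) = 2*(u*(1+2*t)) := by ring
      rw [he] at h'
      omega
    · rw [hu] at hm
      omega
  · exfalso
    rw [hm] at h
    have he : (2*m+1)*(1+2*t) = 2*(m + 2*m*t + t) + 1 := by ring
    rw [he] at h
    omega

lemma aux_dvd (n k : ℕ) (hn : 0 < n) (hgcd : Nat.gcd n k ≤ 2) (i j : ℤ)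
    (h : ((2*n*k:ℕ):ℤ) ∣ 2*k*i + 2*n*j) : ((2*n*k:ℕ):ℤ) ∣ -(2*k*i) + 2*n*j := by
  set d := Nat.gcd n k with hd
  have hd1 : 0 < d := Nat.gcd_pos_of_pos_left _ hn
  obtain ⟨n₁, hn₁⟩ : d ∣ n := Nat.gcd_dvd_left n k
  obtain ⟨k₁, hk₁⟩ : d ∣ k := Nat.gcd_dvd_right n k
  have e1 : n / d = n₁ := by rw [hn₁]; exact Nat.mul_div_cancel_left _ hd1
  have e2 : k / d = k₁ := by rw [hk₁]; exact Nat.mul_div_cancel_left _ hd1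
  have hcop : Nat.Coprime n₁ k₁ := by
    have h2 := Nat.coprime_div_gcd_div_gcd (m := n) (n := k) hd1
    rwa [← hd, e1, e2] at h2
  have h1 : (n:ℤ) ∣ (k:ℤ) * i := by
    have h2 : (2*(n:ℤ)) ∣ 2*(k:ℤ)*i + 2*(n:ℤ)*j := dvd_trans ⟨(k:ℤ), by push_cast; ring⟩ h
    obtain ⟨c, hc⟩ := h2
    refine ⟨c - j, ?_⟩
    have : 2*((k:ℤ)*i) = 2*((n:ℤ)*(c-j)) := by linear_combination hc
    omega
  have h3 : (n₁:ℤ) ∣ i := by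
    have h4 : (n₁:ℤ) ∣ (k₁:ℤ) * i := by
      obtain ⟨c, hc⟩ := h1
      refine ⟨c, ?_⟩
      have hd0 : (d:ℤ) ≠ 0 := by exact_mod_cast hd1.ne'
      have : (d:ℤ) * ((k₁:ℤ)*i) = (d:ℤ) * ((n₁:ℤ)*c) := by
        rw [hn₁, hk₁] at hc; push_cast at hc; linear_combination hc
      exact mul_left_cancel₀ hd0 this
    exact (Nat.isCoprime_iff_coprime.mpr hcop).dvd_of_dvd_mul_left h4
  obtain ⟨i', hi'⟩ := h3
  have h5 : ((2*n*k:ℕ):ℤ) ∣ 4*(k:ℤ)*i := by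
    have hdvd2 : d ∣ 2 := by interval_cases d <;> simp
    obtain ⟨e, he⟩ := hdvd2
    refine ⟨e * i', ?_⟩
    rw [hi', hn₁, hk₁]
    push_cast
    have : ((2:ℕ):ℤ) = (d:ℤ)*e := by exact_mod_cast congrArg (Nat.cast : ℕ → ℤ) he
    push_cast at this
    linear_combination (2*(d:ℤ)*(k₁:ℤ)*(n₁:ℤ)*i') * this
  obtain ⟨c1, hc1⟩ := h
  obtain ⟨c2, hc2⟩ := h5
  exact ⟨c1 - c2, by linear_combination hc1 - hc2⟩

/-- A `2 × 2` matrix is a quasi-reflection (for the action on `k_{-1}[u,v]`) iff it is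
diagonal with exactly one diagonal entry equal to `1`, or antidiagonal with the product
of its antidiagonal entries equal to `-1`. -/
def IsQuasiReflectionMat {K : Type*} [Field K] (m : Matrix (Fin 2) (Fin 2) K) : Prop :=
  (m 0 1 = 0 ∧ m 1 0 = 0 ∧ Xor' (m 0 0 = 1) (m 1 1 = 1)) ∨
  (m 0 0 = 0 ∧ m 1 1 = 0 ∧ m 0 1 * m 1 0 = -1)

/-- Let `ω` be a primitive `2nk`-th root of unity, `g = diag(ω^{2k}, ω^{-2k})` and
`h = antidiag(ω^n, ω^n)`. The group `⟨g, h⟩` contains no quasi-reflection iff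
`k ≢ 2 (mod 4)` and `gcd(n,k) ≤ 2`. -/
theorem closure_no_quasiReflection_iff {K : Type*} [Field K] [IsAlgClosed K] [CharZero K]
    (n k : ℕ) (hn : 0 < n) (hk : 0 < k)
    (ω : K) (hω : IsPrimitiveRoot ω (2 * n * k))
    (g h : (Matrix (Fin 2) (Fin 2) K)ˣ)
    (hg : (↑g : Matrix (Fin 2) (Fin 2) K) = !![ω ^ (2 * k), 0; 0, ω⁻¹ ^ (2 * k)])
    (hh : (↑h : Matrix (Fin 2) (Fin 2) K) = !![0, ω ^ n; ω ^ n, 0]) :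
    (∀ x ∈ Subgroup.closure {g, h},
        ¬ IsQuasiReflectionMat (↑x : Matrix (Fin 2) (Fin 2) K)) ↔
      (k % 4 ≠ 2 ∧ Nat.gcd n k ≤ 2) := by
  have hN0 : 2*n*k ≠ 0 := by positivity
  have hω0 : ω ≠ 0 := hω.ne_zero hN0
  have ωone : ∀ a : ℤ, ω ^ a = 1 ↔ ((2*n*k:ℕ):ℤ) ∣ a := fun a => hω.zpow_eq_one_iff_dvd a
  have ωeq : ∀ a b : ℤ, (ω ^ a = ω ^ b ↔ ((2*n*k:ℕ):ℤ) ∣ a - b) := by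
    intro a b
    rw [← ωone (a-b), zpow_sub₀ hω0, div_eq_one_iff_eq (zpow_ne_zero _ hω0)]
  have hnk1 : ω ^ (2*n*k) = 1 := hω.pow_eq_one
  have hneg : ω ^ (n*k) = -1 := by
    have hsq : ω ^ (n*k) * ω ^ (n*k) = 1 := by
      rw [← pow_add, show n*k + n*k = 2*n*k by ring]; exact hnk1
    have hne1 : ω ^ (n*k) ≠ 1 :=
      hω.pow_ne_one_of_pos_of_lt (by positivity) (by nlinarith [Nat.mul_pos hn hk])
    exact (mul_self_eq_one_iff.mp hsq).resolve_left hne1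
  -- the structure of elements of the closure
  have key : ∀ x ∈ Subgroup.closure {g, h}, ∃ i j : ℤ,
      (↑x : Matrix (Fin 2) (Fin 2) K) = dmat ω (2*k*i+2*n*j) (-(2*k*i)+2*n*j) ∨
      (↑x : Matrix (Fin 2) (Fin 2) K) = amat ω (n+2*k*i+2*n*j) (n-(2*k*i)+2*n*j) := by
    intro x hx
    induction hx using Subgroup.closure_induction with
    | mem y hy =>
      rcases hy with rfl | rfl
      · refine ⟨1, 0, Or.inl ?_⟩
        rw [hg]
        have e1 : ω ^ (2*k) = ω ^ (2*(k:ℤ)*1+2*(n:ℤ)*0) := by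
          rw [show 2*(k:ℤ)*1+2*(n:ℤ)*0 = ((2*k:ℕ):ℤ) by push_cast; ring, zpow_natCast]
        have e2 : ω⁻¹ ^ (2*k) = ω ^ (-(2*(k:ℤ)*1)+2*(n:ℤ)*0) := by
          rw [show -(2*(k:ℤ)*1)+2*(n:ℤ)*0 = -((2*k:ℕ):ℤ) by push_cast; ring, zpow_neg,
            zpow_natCast, inv_pow]
        rw [e1, e2]; rfl
      · refine ⟨0, 0, Or.inr ?_⟩
        rw [hh]
        have e1 : ω ^ n = ω ^ ((n:ℤ)+2*(k:ℤ)*0+2*(n:ℤ)*0) := by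
          rw [show (n:ℤ)+2*(k:ℤ)*0+2*(n:ℤ)*0 = ((n:ℕ):ℤ) by push_cast; ring, zpow_natCast]
        have e2 : ω ^ n = ω ^ ((n:ℤ)-(2*(k:ℤ)*0)+2*(n:ℤ)*0) := by
          rw [show (n:ℤ)-(2*(k:ℤ)*0)+2*(n:ℤ)*0 = ((n:ℕ):ℤ) by push_cast; ring, zpow_natCast]
        have : amat ω ((n:ℤ)+2*(k:ℤ)*0+2*(n:ℤ)*0) ((n:ℤ)-(2*(k:ℤ)*0)+2*(n:ℤ)*0)
            = !![0, ω ^ n; ω ^ n, 0] := by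
          rw [amat, ← e1, ← e2]
        exact this.symm
    | one =>
      refine ⟨0, 0, Or.inl ?_⟩
      rw [Units.val_one, ← dmat_zero (ω := ω)]
      exact dmat_congr (by ring) (by ring)
    | mul y z hy hz ihy ihz =>
      obtain ⟨i, j, hy'⟩ := ihy
      obtain ⟨i', j', hz'⟩ := ihz
      rcases hy' with hy' | hy' <;> rcases hz' with hz' | hz'
      · refine ⟨i+i', j+j', Or.inl ?_⟩
        rw [Units.val_mul, hy', hz', dmul hω0]
        exact dmat_congr (by ring) (by ring)
      · refine ⟨i+i', j+j', Or.inr ?_⟩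
        rw [Units.val_mul, hy', hz', damul hω0]
        exact amat_congr (by ring) (by ring)
      · refine ⟨i-i', j+j', Or.inr ?_⟩
        rw [Units.val_mul, hy', hz', admul hω0]
        exact amat_congr (by ring) (by ring)
      · refine ⟨i-i', j+j'+1, Or.inl ?_⟩
        rw [Units.val_mul, hy', hz', aamul hω0]
        exact dmat_congr (by ring) (by ring)
    | inv y hy ihy =>
      obtain ⟨i, j, hy'⟩ := ihy
      rcases hy' with hy' | hy'
      · refine ⟨-i, -j, Or.inl ?_⟩
        rw [Matrix.coe_units_inv, hy', dmat_inv hω0]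
        exact dmat_congr (by ring) (by ring)
      · refine ⟨i, -j-1, Or.inr ?_⟩
        rw [Matrix.coe_units_inv, hy', amat_inv hω0]
        exact amat_congr (by ring) (by ring)
  constructor
  · -- no quasi-reflection → conditions
    intro H
    constructor
    · -- k % 4 ≠ 2
      intro hk2
      -- h^(2j+1) with k = 4j+2
      have hOdd : ∀ j : ℕ, (↑(h^(2*j+1)) : Matrix (Fin 2) (Fin 2) K)
          = !![0, ω^(2*n*j+n); ω^(2*n*j+n), 0] := by
        intro j
        induction j with
        | zero => simp [pow_one, hh]
        | succ j ih =>
          rw [show 2*(j+1)+1 = (2*j+1)+2 by ring, pow_add, Units.val_mul, ih, pow_two,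
            Units.val_mul, hh]
          rw [Matrix.mul_fin_two, Matrix.mul_fin_two]
          simp only [mul_zero, zero_mul, add_zero, zero_add, mul_zero]
          rw [← pow_add, ← pow_add]
          congr 2 <;> ring
      set j := k / 4 with hj
      have hkj : k = 2*(2*j+1) := by omega
      have hmem : h^(2*j+1) ∈ Subgroup.closure {g, h} :=
        pow_mem (Subgroup.subset_closure (by simp)) _
      refine H _ hmem (Or.inr ?_)
      rw [hOdd j]
      have hprod : ω^(2*n*j+n) * ω^(2*n*j+n) = -1 := by
        rw [← pow_add, show (2*n*j+n)+(2*n*j+n) = n*k by rw [hkj]; ring, hneg]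
      refine ⟨?_, ?_, ?_⟩ <;> simp [hprod]
    · -- gcd ≤ 2
      by_contra hgcd
      push_neg at hgcd
      set d := Nat.gcd n k with hd
      obtain ⟨n₁, hn₁⟩ : d ∣ n := Nat.gcd_dvd_left n k
      obtain ⟨k₁, hk₁⟩ : d ∣ k := Nat.gcd_dvd_right n k
      have hd3 : 3 ≤ d := hgcd
      have hk₁pos : 0 < k₁ := by
        rcases Nat.eq_zero_or_pos k₁ with h0 | h0
        · rw [h0, mul_zero] at hk₁; omega
        · exact h0
      have hk₁le : k₁ ≤ k := by rw [hk₁]; nlinarith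
      have hkn : k*n₁ = n*k₁ := by rw [hn₁, hk₁]; ring
      -- powers of g and h²
      have gpow : ∀ a : ℕ, (↑(g^a) : Matrix (Fin 2) (Fin 2) K)
          = !![ω^(2*k*a), 0; 0, ω⁻¹^(2*k*a)] := by
        intro a
        induction a with
        | zero => simp [Matrix.one_fin_two]
        | succ a ih =>
          rw [pow_succ, Units.val_mul, ih, hg, Matrix.mul_fin_two]
          simp only [mul_zero, zero_mul, add_zero, zero_add]
          rw [← pow_add, ← pow_add]
          congr 2 <;> ring
      have hpow2 : ∀ a : ℕ, (↑(h^(2*a)) : Matrix (Fin 2) (Fin 2) K)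
          = !![ω^(2*n*a), 0; 0, ω^(2*n*a)] := by
        intro a
        induction a with
        | zero => simp [Matrix.one_fin_two]
        | succ a ih =>
          rw [show 2*(a+1) = 2*a+2 by ring, pow_add, Units.val_mul, ih, pow_two,
            Units.val_mul, hh, Matrix.mul_fin_two, Matrix.mul_fin_two]
          simp only [mul_zero, zero_mul, add_zero, zero_add]
          rw [← pow_add, ← pow_add]
          congr 2 <;> ring
      set x := g^n₁ * h^(2*(k-k₁)) with hxdef
      have hmem : x ∈ Subgroup.closure {g, h} :=
        mul_mem (pow_mem (Subgroup.subset_closure (by simp)) _)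
          (pow_mem (Subgroup.subset_closure (by simp)) _)
      have hx : (↑x : Matrix (Fin 2) (Fin 2) K)
          = !![ω^(2*k*n₁) * ω^(2*n*(k-k₁)), 0; 0, ω⁻¹^(2*k*n₁) * ω^(2*n*(k-k₁))] := by
        rw [hxdef, Units.val_mul, gpow, hpow2, Matrix.mul_fin_two]
        simp
      refine H x hmem (Or.inl ?_)
      rw [hx]
      have h00 : ω^(2*k*n₁) * ω^(2*n*(k-k₁)) = 1 := by
        have hsub : n*(k - k₁) + n*k₁ = n*k := by rw [← Nat.mul_add, Nat.sub_add_cancel hk₁le]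
        have hexp : 2*k*n₁ + 2*n*(k-k₁) = 2*n*k := by nlinarith [hkn, hsub]
        rw [← pow_add, hexp, hnk1]
      have h11 : ¬ (ω⁻¹^(2*k*n₁) * ω^(2*n*(k-k₁)) = 1) := by
        intro hcon
        rw [inv_pow] at hcon
        have hz : ω ^ (2*k*n₁) = ω ^ (2*n*(k-k₁)) :=
          (inv_mul_eq_one₀ (pow_ne_zero _ hω0)).mp hcon
        have hzz : ω ^ ((2*k*n₁:ℕ):ℤ) = ω ^ ((2*n*(k-k₁):ℕ):ℤ) := by
          rw [zpow_natCast, zpow_natCast]; exact hz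
        rw [ωeq] at hzz
        obtain ⟨c, hc⟩ := hzz
        have hknZ : (k:ℤ)*n₁ = (n:ℤ)*k₁ := by exact_mod_cast hkn
        have hkZ : (k:ℤ) = (d:ℤ)*k₁ := by exact_mod_cast hk₁
        have h4 : ((n:ℤ)*k₁)*4 = ((n:ℤ)*k₁)*(2*d*(c+1)) := by
          push_cast [Nat.cast_sub hk₁le] at hc
          rw [hkZ] at hc
          linear_combination hc - 2*hknZ + 2*(n₁:ℤ)*hkZ
        have hnk₁0 : ((n:ℤ)*k₁) ≠ 0 := by positivity
        have h44 : (4:ℤ) = 2*d*(c+1) := mul_left_cancel₀ hnk₁0 h4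
        have hdvd : (2*(d:ℤ)) ∣ 4 := ⟨c+1, by linarith⟩
        have hle : (2*(d:ℤ)) ≤ 4 := Int.le_of_dvd (by norm_num) hdvd
        have : (3:ℤ) ≤ d := by exact_mod_cast hd3
        omega
      refine ⟨by simp, by simp, Or.inl ⟨h00, h11⟩⟩
  · -- conditions → no quasi-reflection
    rintro ⟨hk4, hgcd⟩ x hx hQR
    obtain ⟨i, j, hx'⟩ := key x hx
    rcases hx' with hx' | hx'
    · rw [hx'] at hQR
      rcases hQR with ⟨-, -, hxor⟩ | ⟨h00, -, -⟩
      · simp [dmat] at hxor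
        rcases hxor with ⟨h1, h2⟩ | ⟨h1, h2⟩
        · exact h2 ((ωone _).mpr (aux_dvd n k hn hgcd i j ((ωone _).mp h1)))
        · refine h2 ((ωone _).mpr ?_)
          have := aux_dvd n k hn hgcd (-i) j
            (by rw [show 2*(k:ℤ)*(-i)+2*(n:ℤ)*j = -(2*(k:ℤ)*i)+2*(n:ℤ)*j by ring]
                exact (ωone _).mp h1)
          rw [show -(2*(k:ℤ)*(-i))+2*(n:ℤ)*j = 2*(k:ℤ)*i+2*(n:ℤ)*j by ring] at this
          exact this
      · simp [dmat] at h00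
        exact zpow_ne_zero _ hω0 h00
    · rw [hx'] at hQR
      rcases hQR with ⟨h01, -, -⟩ | ⟨-, -, hprod⟩
      · simp [amat] at h01
        exact zpow_ne_zero _ hω0 h01
      · simp only [amat] at hprod
        simp at hprod
        rw [← zpow_add₀ hω0] at hprod
        have hneg' : (-1 : K) = ω ^ ((n*k:ℕ):ℤ) := by rw [zpow_natCast, hneg]
        rw [hneg'] at hprod
        rw [ωeq] at hprod
        obtain ⟨t, ht⟩ := hprod
        have hc : (n:ℤ) * ((k:ℤ)*(1+2*t)) = (n:ℤ) * (2*(1+2*j)) := by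
          push_cast at ht
          linear_combination -ht
        have hnZ : (n:ℤ) ≠ 0 := by exact_mod_cast hn.ne'
        exact hk4 (aux_k4 k t j (mul_left_cancel₀ hnZ hc))
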